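/- arXiv:2412.10276 — 2 statements merged into one kernel-verified Lean document; each statement's English description precedes it below -/
import Mathlib

section
/- Let X and Y be random vectors in ℝ^d with finite first absolute moments, distributions μ and ν. Suppose (E|X|^p)^{1/p} ≤ b and (E|Y|^p)^{1/p} ≤ b for some p > 1. Then W(μ,ν) ≤ 3·W^{(r)}(μ,ν) + 4b·(2b/r)^{p-1} for any r > 0, where W^{(r)}(μ,ν) = sup{|∫u dμ − ∫u dν| : u ∈ U_r} and U_r is the set of functions u : ℝ^d → ℝ with Lipschitz seminorm at most 1, u(0)=0, supported on the closed ball B_r. -/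
/-!
Subtracting `u 0` from a 1-Lipschitz `u` gives `w` with `|w x| ≤ ‖x‖`. Clamping `w` between
`±(r - ‖x‖)⁺` yields a function `v` admissible for `W^{(r)}` that agrees with `w` on `B_{r/2}`;
off `B_{r/2}` the error `|w - v| ≤ ‖x‖` is at most `‖x‖ ^ p / (r/2) ^ (p-1)`. Integrating against
`μ` and `ν` and using the moment bounds gives `W ≤ W^{(r)} + 2b(2b/r)^{p-1}`.
-/

open MeasureTheory

/-- Kantorovich (Wasserstein-1) distance via Kantorovich duality. -/
noncomputable def wassersteinDual {E : Type*} [MeasurableSpace E] [PseudoMetricSpace E]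
    (μ ν : Measure E) : ℝ :=
  ⨆ u : {u : E → ℝ // LipschitzWith 1 u}, |(∫ x, u.1 x ∂μ) - ∫ x, u.1 x ∂ν|

/-- The restricted distance `W^{(r)}`: supremum over 1-Lipschitz functions vanishing
at the origin and supported on the closed ball of radius `r`. -/
noncomputable def wassersteinDualRestricted {d : ℕ} (r : ℝ)
    (μ ν : Measure (EuclideanSpace ℝ (Fin d))) : ℝ :=
  ⨆ u : {u : EuclideanSpace ℝ (Fin d) → ℝ //
      LipschitzWith 1 u ∧ u 0 = 0 ∧ ∀ x, r < ‖x‖ → u x = 0},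
    |(∫ x, u.1 x ∂μ) - ∫ x, u.1 x ∂ν|

lemma Real.le_rpow_div_rpow_sub_one {a s p : ℝ} (hs : 0 < s) (hsa : s ≤ a) (hp : 1 ≤ p) :
    a ≤ a ^ p / s ^ (p - 1) := by
  have ha : 0 ≤ a := hs.le.trans hsa
  rw [le_div_iff₀ (Real.rpow_pos_of_pos hs _)]
  calc a * s ^ (p - 1) ≤ a * a ^ (p - 1) := by gcongr
    _ = a ^ p := by rw [← Real.rpow_one_add' ha (by linarith), add_sub_cancel]

lemma abs_le_of_lipschitzWith_of_support {E : Type*} [SeminormedAddCommGroup E] {r : ℝ}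
    {u : E → ℝ} (hu : LipschitzWith 1 u) (hu0 : u 0 = 0) (hsupp : ∀ x, r < ‖x‖ → u x = 0)
    (hr : 0 ≤ r) (x : E) : |u x| ≤ r := by
  rcases le_or_gt ‖x‖ r with hx | hx
  · have := hu.norm_sub_le x 0
    simp only [hu0, sub_zero, Real.norm_eq_abs, NNReal.coe_one, one_mul] at this
    linarith
  · simpa [hsupp x hx] using hr

section Truncation

variable {E : Type*} [SeminormedAddCommGroup E] {r : ℝ} {w : E → ℝ} {x : E}

noncomputable def ballTent (r : ℝ) (x : E) : ℝ := max (r - ‖x‖) 0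

noncomputable def truncateBall (r : ℝ) (w : E → ℝ) (x : E) : ℝ :=
  max (-ballTent r x) (min (w x) (ballTent r x))

lemma lipschitzWith_one_ballTent : LipschitzWith 1 (ballTent r : E → ℝ) := by
  show LipschitzWith 1 fun x => max (r - ‖x‖) 0
  simpa using ((LipschitzWith.const r).sub lipschitzWith_one_norm).max_const 0

lemma LipschitzWith.truncateBall (hw : LipschitzWith 1 w) :
    LipschitzWith 1 (truncateBall r w) := by
  show LipschitzWith 1 fun x => max (-ballTent r x) (min (w x) (ballTent r x))
  simpa using lipschitzWith_one_ballTent.neg.max (hw.min lipschitzWith_one_ballTent)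

lemma truncateBall_eq_zero_of_lt_norm (hx : r < ‖x‖) : truncateBall r w x = 0 := by
  have : ballTent r x = 0 := max_eq_right (by linarith)
  simp [truncateBall, this]

lemma truncateBall_eq_self (h : |w x| ≤ ballTent r x) : truncateBall r w x = w x := by
  rw [abs_le] at h
  rw [truncateBall, min_eq_left h.2, max_eq_right h.1]

lemma truncateBall_zero (hr : 0 ≤ r) (hw : w 0 = 0) : truncateBall r w 0 = 0 := by
  rw [truncateBall_eq_self] <;> simp [ballTent, hw, hr]

lemma abs_sub_truncateBall_le : |w x - truncateBall r w x| ≤ |w x| := by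
  have ht : 0 ≤ ballTent r x := le_max_right _ _
  unfold truncateBall
  rw [abs_le]
  cases abs_cases (w x) <;> cases max_cases (-ballTent r x) (min (w x) (ballTent r x)) <;>
    cases min_cases (w x) (ballTent r x) <;> constructor <;> linarith

lemma abs_sub_truncateBall_le_rpow {p : ℝ} (hr : 0 < r) (hp : 1 ≤ p) (hw : |w x| ≤ ‖x‖) :
    |w x - truncateBall r w x| ≤ ‖x‖ ^ p / (r / 2) ^ (p - 1) := by
  rcases le_or_gt ‖x‖ (r / 2) with hx | hx
  · have hwx : |w x| ≤ ballTent r x := hw.trans (le_max_of_le_left (by linarith))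
    rw [truncateBall_eq_self hwx, sub_self, abs_zero]
    positivity
  · calc |w x - truncateBall r w x| ≤ ‖x‖ := abs_sub_truncateBall_le.trans hw
      _ ≤ ‖x‖ ^ p / (r / 2) ^ (p - 1) := Real.le_rpow_div_rpow_sub_one (by positivity) hx.le hp

end Truncation

section Integration

variable {α : Type*} [MeasurableSpace α]

lemma abs_integral_sub_integral_le {μ ν : Measure α} {f g : α → ℝ}
    (hfμ : Integrable f μ) (hgμ : Integrable g μ) (hfν : Integrable f ν) (hgν : Integrable g ν) :
    |(∫ x, f x ∂μ) - ∫ x, f x ∂ν| ≤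
      |(∫ x, g x ∂μ) - ∫ x, g x ∂ν| + ∫ x, |f x - g x| ∂μ + ∫ x, |f x - g x| ∂ν := by
  have hμ : |∫ x, f x - g x ∂μ| ≤ ∫ x, |f x - g x| ∂μ := abs_integral_le_integral_abs
  have hν : |∫ x, f x - g x ∂ν| ≤ ∫ x, |f x - g x| ∂ν := abs_integral_le_integral_abs
  rw [integral_sub hfμ hgμ, abs_le] at hμ
  rw [integral_sub hfν hgν, abs_le] at hν
  have hg := abs_le.mp (le_refl |(∫ x, g x ∂μ) - ∫ x, g x ∂ν|)
  rw [abs_le]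
  constructor <;> linarith [hμ.1, hμ.2, hν.1, hν.2, hg.1, hg.2]

lemma integral_sub_const_sub_integral_sub_const (μ ν : Measure α) [IsProbabilityMeasure μ]
    [IsProbabilityMeasure ν] {f : α → ℝ} (hfμ : Integrable f μ) (hfν : Integrable f ν) (c : ℝ) :
    (∫ x, f x - c ∂μ) - ∫ x, f x - c ∂ν = (∫ x, f x ∂μ) - ∫ x, f x ∂ν := by
  simp [integral_sub hfμ (integrable_const c), integral_sub hfν (integrable_const c)]

lemma abs_integral_sub_integral_le_of_abs_le (μ ν : Measure α) [IsProbabilityMeasure μ]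
    [IsProbabilityMeasure ν] {f : α → ℝ} {C : ℝ} (hf : ∀ x, |f x| ≤ C) :
    |(∫ x, f x ∂μ) - ∫ x, f x ∂ν| ≤ 2 * C := by
  have hf' : ∀ x, ‖f x‖ ≤ C := fun x => (Real.norm_eq_abs _).trans_le (hf x)
  have hμ := norm_integral_le_of_norm_le_const (μ := μ) (.of_forall hf')
  have hν := norm_integral_le_of_norm_le_const (μ := ν) (.of_forall hf')
  simp only [probReal_univ, mul_one, Real.norm_eq_abs] at hμ hν
  linarith [abs_sub (∫ x, f x ∂μ) (∫ x, f x ∂ν)]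

end Integration

section FirstMoment

variable {E : Type*} [NormedAddCommGroup E] [MeasurableSpace E] [OpensMeasurableSpace E]
  {μ : Measure E} [IsFiniteMeasure μ]

lemma integrable_norm_of_integrable_norm_rpow {p : ℝ} (hp : 1 ≤ p)
    (h : Integrable (fun x : E => ‖x‖ ^ p) μ) : Integrable (fun x : E => ‖x‖) μ := by
  simpa using integrable_norm_rpow_of_le continuous_norm.aestronglyMeasurable zero_le_one
    (by linarith) hp (by simpa using h)

lemma LipschitzWith.integrable_of_integrable_norm {f : E → ℝ} {K : NNReal}
    (hf : LipschitzWith K f) (h : Integrable (fun x : E => ‖x‖) μ) : Integrable f μ := by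
  refine ((integrable_const |f 0|).add (h.const_mul K)).mono' hf.continuous.aestronglyMeasurable
    (.of_forall fun x => ?_)
  show ‖f x‖ ≤ |f 0| + K * ‖x‖
  have := hf.norm_sub_le x 0
  rw [sub_zero, Real.norm_eq_abs] at *
  linarith [abs_sub_abs_le_abs_sub (f x) (f 0)]

end FirstMoment

section Restricted

variable {d : ℕ} {μ ν : Measure (EuclideanSpace ℝ (Fin d))} {r : ℝ}

lemma wassersteinDualRestricted_nonneg : 0 ≤ wassersteinDualRestricted r μ ν :=
  Real.iSup_nonneg fun _ => abs_nonneg _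

lemma abs_integral_sub_integral_le_wassersteinDualRestricted [IsProbabilityMeasure μ]
    [IsProbabilityMeasure ν] (hr : 0 ≤ r) {u : EuclideanSpace ℝ (Fin d) → ℝ}
    (hu : LipschitzWith 1 u) (hu0 : u 0 = 0) (hsupp : ∀ x, r < ‖x‖ → u x = 0) :
    |(∫ x, u x ∂μ) - ∫ x, u x ∂ν| ≤ wassersteinDualRestricted r μ ν := by
  refine le_ciSup (f := fun u : {u : EuclideanSpace ℝ (Fin d) → ℝ //
      LipschitzWith 1 u ∧ u 0 = 0 ∧ ∀ x, r < ‖x‖ → u x = 0} =>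
      |(∫ x, u.1 x ∂μ) - ∫ x, u.1 x ∂ν|) ⟨2 * r, ?_⟩ ⟨u, hu, hu0, hsupp⟩
  rintro _ ⟨⟨f, hf, hf0, hfsupp⟩, rfl⟩
  exact abs_integral_sub_integral_le_of_abs_le μ ν
    (abs_le_of_lipschitzWith_of_support hf hf0 hfsupp hr)

variable [IsProbabilityMeasure μ] [IsProbabilityMeasure ν] {p : ℝ}

lemma abs_integral_sub_integral_le_wassersteinDualRestricted_add (hp : 1 ≤ p) (hr : 0 < r)
    (hμ : Integrable (fun x => ‖x‖ ^ p) μ) (hν : Integrable (fun x => ‖x‖ ^ p) ν)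
    {u : EuclideanSpace ℝ (Fin d) → ℝ} (hu : LipschitzWith 1 u) :
    |(∫ x, u x ∂μ) - ∫ x, u x ∂ν| ≤ wassersteinDualRestricted r μ ν +
      ((∫ x, ‖x‖ ^ p ∂μ) + ∫ x, ‖x‖ ^ p ∂ν) / (r / 2) ^ (p - 1) := by
  set w := fun x => u x - u 0
  set v := truncateBall r w
  have hw : LipschitzWith 1 w := by simpa using hu.sub (LipschitzWith.const (u 0))
  have hv : LipschitzWith 1 v := hw.truncateBall
  have hw_le (x) : |w x| ≤ ‖x‖ := by simpa using hu.norm_sub_le x 0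
  have hμ1 := integrable_norm_of_integrable_norm_rpow hp hμ
  have hν1 := integrable_norm_of_integrable_norm_rpow hp hν
  have herr {ρ : Measure (EuclideanSpace ℝ (Fin d))} [IsFiniteMeasure ρ]
      (hρ : Integrable (fun x => ‖x‖ ^ p) ρ) (hρ1 : Integrable (fun x => ‖x‖) ρ) :
      ∫ x, |w x - v x| ∂ρ ≤ (∫ x, ‖x‖ ^ p ∂ρ) / (r / 2) ^ (p - 1) := by
    rw [← integral_div]
    exact integral_mono ((hw.integrable_of_integrable_norm hρ1).sub
      (hv.integrable_of_integrable_norm hρ1)).abs (hρ.div_const _)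
      fun x => abs_sub_truncateBall_le_rpow hr hp (hw_le x)
  calc |(∫ x, u x ∂μ) - ∫ x, u x ∂ν| = |(∫ x, w x ∂μ) - ∫ x, w x ∂ν| := by
        rw [integral_sub_const_sub_integral_sub_const μ ν (hu.integrable_of_integrable_norm hμ1)
          (hu.integrable_of_integrable_norm hν1)]
    _ ≤ |(∫ x, v x ∂μ) - ∫ x, v x ∂ν| + (∫ x, |w x - v x| ∂μ) + ∫ x, |w x - v x| ∂ν :=
        abs_integral_sub_integral_le (hw.integrable_of_integrable_norm hμ1)
          (hv.integrable_of_integrable_norm hμ1) (hw.integrable_of_integrable_norm hν1)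
          (hv.integrable_of_integrable_norm hν1)
    _ ≤ _ := by
        rw [add_div, ← add_assoc]
        gcongr ?_ + ?_ + ?_
        · exact abs_integral_sub_integral_le_wassersteinDualRestricted hr.le hv
            (truncateBall_zero hr.le (sub_self _)) fun _ => truncateBall_eq_zero_of_lt_norm
        · exact herr hμ hμ1
        · exact herr hν hν1

end Restricted

theorem wasserstein_le_restricted {d : ℕ}
    (μ ν : Measure (EuclideanSpace ℝ (Fin d)))
    [IsProbabilityMeasure μ] [IsProbabilityMeasure ν]
    (p b r : ℝ) (hp : 1 < p) (hb : 0 ≤ b) (hr : 0 < r)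
    (hμint : Integrable (fun x => ‖x‖ ^ p) μ) (hνint : Integrable (fun x => ‖x‖ ^ p) ν)
    (hμ : (∫ x, ‖x‖ ^ p ∂μ) ^ (1 / p) ≤ b) (hν : (∫ x, ‖x‖ ^ p ∂ν) ^ (1 / p) ≤ b) :
    wassersteinDual μ ν ≤
      3 * wassersteinDualRestricted r μ ν + 4 * b * (2 * b / r) ^ (p - 1) := by
  have hp0 : 0 < p := by linarith
  have moment {ρ : Measure (EuclideanSpace ℝ (Fin d))} (hρ : (∫ x, ‖x‖ ^ p ∂ρ) ^ (1 / p) ≤ b) :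
      ∫ x, ‖x‖ ^ p ∂ρ ≤ b ^ p := by
    rwa [one_div, Real.rpow_inv_le_iff_of_pos (integral_nonneg fun _ => by positivity) hb hp0]
      at hρ
  have hc : b ^ p / (r / 2) ^ (p - 1) = b * (2 * b / r) ^ (p - 1) := by
    rw [show 2 * b / r = b / (r / 2) by field_simp, Real.div_rpow hb (by positivity),
      mul_div_assoc', ← Real.rpow_one_add' hb (by linarith), add_sub_cancel]
  have hW := wassersteinDualRestricted_nonneg (r := r) (μ := μ) (ν := ν)
  have hc0 : 0 ≤ b * (2 * b / r) ^ (p - 1) := by positivity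
  refine Real.iSup_le (fun u => ?_) (by positivity)
  calc _ ≤ wassersteinDualRestricted r μ ν +
        ((∫ x, ‖x‖ ^ p ∂μ) + ∫ x, ‖x‖ ^ p ∂ν) / (r / 2) ^ (p - 1) :=
        abs_integral_sub_integral_le_wassersteinDualRestricted_add hp.le hr hμint hνint u.2
    _ ≤ wassersteinDualRestricted r μ ν + 2 * (b ^ p / (r / 2) ^ (p - 1)) := by
        rw [← mul_div_assoc, two_mul]
        gcongr
        exacts [moment hμ, moment hν]
    _ ≤ _ := by linarith
end

section
/- Let X and Y be random vectors in ℝ^d with finite first absolute moments and characteristic functions f(t) = E e^{i⟨t,X⟩}, g(t) = E e^{i⟨t,Y⟩}. Then for every t ∈ ℝ^d, |f(t) − g(t)| ≤ 2|t| · sup_{|θ|=1} W(⟨X,θ⟩, ⟨Y,θ⟩). -/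
/-!
Write `t = s • θ` with `‖θ‖ = 1`. Then the characteristic functions of `X` and `Y` at `t` are
those of the projections `⟪X, θ⟫` and `⟪Y, θ⟫` at `s`, and the real and imaginary parts of
their difference are differences of expectations of `x ↦ cos (s x)` and `x ↦ sin (s x)`. These
are `|s|`-Lipschitz, so by Kantorovich duality each part is at most `|s| W(⟪X, θ⟫, ⟪Y, θ⟫)`,
and `‖z‖ ≤ |re z| + |im z|` gives the factor `2`. Finite first moments are needed because a real
`⨆` of an unbounded family is `0`: they bound every `W(⟪X, θ⟫, ⟪Y, θ⟫)` by `E‖X‖ + E‖Y‖`.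
-/

open MeasureTheory

open scoped NNReal

section Lipschitz

variable {E : Type*} [PseudoMetricSpace E] [MeasurableSpace E] [OpensMeasurableSpace E]
  {μ ν : Measure E} {K : ℝ≥0} {u : E → ℝ} {x₀ : E}

namespace LipschitzWith

theorem integrable_of_integrable_dist [IsFiniteMeasure μ] (hu : LipschitzWith K u)
    (hμ : Integrable (dist · x₀) μ) : Integrable u μ := by
  refine Integrable.mono' ((hμ.const_mul K).add (integrable_const |u x₀|))
    hu.continuous.aestronglyMeasurable (ae_of_all _ fun x => ?_)
  have h := hu.dist_le_mul x x₀
  rw [Real.dist_eq] at h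
  show |u x| ≤ K * dist x x₀ + |u x₀|
  linarith [abs_sub_abs_le_abs_sub (u x) (u x₀)]

theorem abs_integral_sub_le_mul_integral_dist [IsProbabilityMeasure μ] (hu : LipschitzWith K u)
    (hμ : Integrable (dist · x₀) μ) :
    |∫ x, u x ∂μ - u x₀| ≤ K * ∫ x, dist x x₀ ∂μ := by
  have hsub : ∫ x, u x ∂μ - u x₀ = ∫ x, (u x - u x₀) ∂μ := by
    rw [integral_sub (hu.integrable_of_integrable_dist hμ) (integrable_const _)]
    simp
  rw [hsub, ← integral_const_mul]
  refine (abs_integral_le_integral_abs).trans (integral_mono_of_nonneg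
    (ae_of_all _ fun _ => abs_nonneg _) (hμ.const_mul _) (ae_of_all _ fun x => ?_))
  simpa only [Real.dist_eq] using hu.dist_le_mul x x₀

theorem abs_integral_sub_integral_le [IsProbabilityMeasure μ] [IsProbabilityMeasure ν]
    (hu : LipschitzWith K u) (hμ : Integrable (dist · x₀) μ) (hν : Integrable (dist · x₀) ν) :
    |∫ x, u x ∂μ - ∫ x, u x ∂ν| ≤ K * (∫ x, dist x x₀ ∂μ + ∫ x, dist x x₀ ∂ν) := by
  calc |∫ x, u x ∂μ - ∫ x, u x ∂ν|
      = |(∫ x, u x ∂μ - u x₀) - (∫ x, u x ∂ν - u x₀)| := by ring_nf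
    _ ≤ |∫ x, u x ∂μ - u x₀| + |∫ x, u x ∂ν - u x₀| := abs_sub _ _
    _ ≤ K * ∫ x, dist x x₀ ∂μ + K * ∫ x, dist x x₀ ∂ν :=
      add_le_add (hu.abs_integral_sub_le_mul_integral_dist hμ)
        (hu.abs_integral_sub_le_mul_integral_dist hν)
    _ = K * (∫ x, dist x x₀ ∂μ + ∫ x, dist x x₀ ∂ν) := by ring

end LipschitzWith

instance : Nonempty {u : E → ℝ // LipschitzWith 1 u} :=
  ⟨⟨fun _ => 0, LipschitzWith.const' 0⟩⟩

variable [IsProbabilityMeasure μ] [IsProbabilityMeasure ν]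

theorem bddAbove_range_abs_integral_sub_integral (hμ : Integrable (dist · x₀) μ)
    (hν : Integrable (dist · x₀) ν) :
    BddAbove (Set.range fun u : {u : E → ℝ // LipschitzWith 1 u} =>
      |∫ x, u.1 x ∂μ - ∫ x, u.1 x ∂ν|) := by
  refine ⟨∫ x, dist x x₀ ∂μ + ∫ x, dist x x₀ ∂ν, ?_⟩
  rintro _ ⟨u, rfl⟩
  simpa using u.2.abs_integral_sub_integral_le hμ hν

theorem wassersteinDual_le_integral_dist_add (hμ : Integrable (dist · x₀) μ)
    (hν : Integrable (dist · x₀) ν) :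
    wassersteinDual μ ν ≤ ∫ x, dist x x₀ ∂μ + ∫ x, dist x x₀ ∂ν :=
  ciSup_le fun u => by simpa using u.2.abs_integral_sub_integral_le hμ hν

theorem LipschitzWith.abs_integral_sub_le_mul_wassersteinDual (hu : LipschitzWith K u)
    (hμ : Integrable (dist · x₀) μ) (hν : Integrable (dist · x₀) ν) :
    |∫ x, u x ∂μ - ∫ x, u x ∂ν| ≤ K * wassersteinDual μ ν := by
  rcases eq_or_ne K 0 with rfl | hK
  · have hconst : u = fun _ => u x₀ := funext fun x =>
      dist_le_zero.1 <| by
        simpa only [NNReal.coe_zero, zero_mul] using hu.dist_le_mul x x₀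
    rw [hconst]
    simp
  · have hK' : (0 : ℝ) < K := by positivity
    have hv : LipschitzWith 1 fun x => (K : ℝ)⁻¹ * u x := by
      simpa [hK, Function.comp_def] using (lipschitzWith_smul (K : ℝ)⁻¹).comp hu
    have h := le_ciSup (bddAbove_range_abs_integral_sub_integral hμ hν) ⟨_, hv⟩
    rw [integral_const_mul, integral_const_mul, ← mul_sub, abs_mul, abs_inv,
      abs_of_pos hK', inv_mul_le_iff₀ hK'] at h
    exact h

end Lipschitz

open Complex

theorem integrable_cexp_mul_mul_I (μ : Measure ℝ) [IsFiniteMeasure μ] (s : ℝ) :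
    Integrable (fun x : ℝ => cexp (s * x * I)) μ :=
  (integrable_const (1 : ℝ)).mono' (by fun_prop) (ae_of_all _ fun x => by
    simp [← ofReal_mul, norm_exp_ofReal_mul_I])

theorem re_charFun_real (μ : Measure ℝ) [IsFiniteMeasure μ] (s : ℝ) :
    (charFun μ s).re = ∫ x, Real.cos (s * x) ∂μ := by
  rw [charFun_apply_real]
  refine (integral_re (integrable_cexp_mul_mul_I μ s)).symm.trans (integral_congr_ae
    (ae_of_all _ fun x => ?_))
  simp [← ofReal_mul, exp_ofReal_mul_I_re]

theorem im_charFun_real (μ : Measure ℝ) [IsFiniteMeasure μ] (s : ℝ) :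
    (charFun μ s).im = ∫ x, Real.sin (s * x) ∂μ := by
  rw [charFun_apply_real]
  refine (integral_im (integrable_cexp_mul_mul_I μ s)).symm.trans (integral_congr_ae
    (ae_of_all _ fun x => ?_))
  simp [← ofReal_mul, exp_ofReal_mul_I_im]

theorem norm_charFun_sub_le_wassersteinDual {μ ν : Measure ℝ} [IsProbabilityMeasure μ]
    [IsProbabilityMeasure ν] (hμ : Integrable id μ) (hν : Integrable id ν) (s : ℝ) :
    ‖charFun μ s - charFun ν s‖ ≤ 2 * |s| * wassersteinDual μ ν := by
  have hμ' : Integrable (dist · 0) μ := by simpa using hμ.norm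
  have hν' : Integrable (dist · 0) ν := by simpa using hν.norm
  have hW {f : ℝ → ℝ} (hf : LipschitzWith 1 f) :
      |∫ x, f (s * x) ∂μ - ∫ x, f (s * x) ∂ν| ≤ |s| * wassersteinDual μ ν := by
    have hfs : LipschitzWith ‖s‖₊ fun x => f (s * x) := by
      simpa [Function.comp_def] using hf.comp (lipschitzWith_smul s)
    simpa using hfs.abs_integral_sub_le_mul_wassersteinDual hμ' hν'
  calc ‖charFun μ s - charFun ν s‖
      ≤ |(charFun μ s - charFun ν s).re| + |(charFun μ s - charFun ν s).im| :=
        norm_le_abs_re_add_abs_im _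
    _ ≤ |s| * wassersteinDual μ ν + |s| * wassersteinDual μ ν := by
        rw [sub_re, sub_im, re_charFun_real, re_charFun_real, im_charFun_real, im_charFun_real]
        exact add_le_add (hW Real.lipschitzWith_cos) (hW Real.lipschitzWith_sin)
    _ = 2 * |s| * wassersteinDual μ ν := by ring

section Projection

variable {Ω E : Type*} [MeasurableSpace Ω] {P : Measure Ω} [NormedAddCommGroup E]
  [InnerProductSpace ℝ E]

theorem MeasureTheory.Integrable.id_map {f : Ω → ℝ} (hf : Integrable f P) :
    Integrable id (P.map f) :=
  (integrable_map_measure aestronglyMeasurable_id hf.aemeasurable).2 hf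

theorem integral_cexp_I_mul_inner_smul_eq_charFun_map [MeasurableSpace E]
    [OpensMeasurableSpace E] {Z : Ω → E} (hZ : AEMeasurable Z P) (s : ℝ) (θ : E) :
    ∫ ω, cexp (I * (inner ℝ (s • θ) (Z ω) : ℝ)) ∂P =
      charFun (P.map (fun ω => inner ℝ (Z ω) θ)) s := by
  rw [charFun_apply_real, integral_map (by fun_prop) (by fun_prop)]
  congr with ω
  rw [real_inner_smul_left, real_inner_comm]
  push_cast
  ring_nf

theorem wassersteinDual_map_inner_le [IsProbabilityMeasure P] {X Y : Ω → E}
    (hX : Integrable X P) (hY : Integrable Y P) {θ : E} (hθ : ‖θ‖ ≤ 1) :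
    wassersteinDual (P.map (fun ω => inner ℝ (X ω) θ)) (P.map (fun ω => inner ℝ (Y ω) θ)) ≤
      ∫ ω, ‖X ω‖ ∂P + ∫ ω, ‖Y ω‖ ∂P := by
  have hproj {Z : Ω → E} (hZ : Integrable Z P) :
      Integrable (dist · 0) (P.map (fun ω => inner ℝ (Z ω) θ)) ∧
        ∫ x, dist x 0 ∂(P.map (fun ω => inner ℝ (Z ω) θ)) ≤ ∫ ω, ‖Z ω‖ ∂P := by
    have hZθ := hZ.inner_const (𝕜 := ℝ) θ
    refine ⟨by simpa using hZθ.id_map.norm, ?_⟩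
    rw [integral_map hZθ.aemeasurable (by fun_prop)]
    refine integral_mono (by simpa [Function.comp_def] using hZθ.norm) hZ.norm fun ω => ?_
    rw [dist_zero_right]
    exact (norm_inner_le_norm _ _).trans (mul_le_of_le_one_right (norm_nonneg _) hθ)
  have := Measure.isProbabilityMeasure_map (μ := P) (hX.inner_const (𝕜 := ℝ) θ).aemeasurable
  have := Measure.isProbabilityMeasure_map (μ := P) (hY.inner_const (𝕜 := ℝ) θ).aemeasurable
  exact (wassersteinDual_le_integral_dist_add (hproj hX).1 (hproj hY).1).trans
    (add_le_add (hproj hX).2 (hproj hY).2)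

end Projection

theorem charFun_diff_le_sup_proj_wasserstein {d : ℕ} {Ω : Type*} [MeasureSpace Ω]
    [IsProbabilityMeasure (volume : Measure Ω)]
    (X Y : Ω → EuclideanSpace ℝ (Fin d)) (hXm : AEMeasurable X) (hYm : AEMeasurable Y)
    (hX : Integrable (fun ω => ‖X ω‖)) (hY : Integrable (fun ω => ‖Y ω‖))
    (t : EuclideanSpace ℝ (Fin d)) :
    ‖(∫ ω, Complex.exp (Complex.I * ((inner ℝ t (X ω) : ℝ) : ℂ))) -
        ∫ ω, Complex.exp (Complex.I * ((inner ℝ t (Y ω) : ℝ) : ℂ))‖ ≤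
      2 * ‖t‖ * ⨆ θ : {θ : EuclideanSpace ℝ (Fin d) // ‖θ‖ = 1},
        wassersteinDual (Measure.map (fun ω => (inner ℝ (X ω) θ.1 : ℝ)) volume)
          (Measure.map (fun ω => (inner ℝ (Y ω) θ.1 : ℝ)) volume) := by
  rcases eq_or_ne t 0 with rfl | ht
  · simp
  have hXi : Integrable X := (integrable_norm_iff hXm.aestronglyMeasurable).1 hX
  have hYi : Integrable Y := (integrable_norm_iff hYm.aestronglyMeasurable).1 hY
  have hbdd : BddAbove (Set.range fun θ : {θ : EuclideanSpace ℝ (Fin d) // ‖θ‖ = 1} =>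
      wassersteinDual (Measure.map (fun ω => (inner ℝ (X ω) θ.1 : ℝ)) volume)
        (Measure.map (fun ω => (inner ℝ (Y ω) θ.1 : ℝ)) volume)) :=
    ⟨_, Set.forall_mem_range.2 fun θ => wassersteinDual_map_inner_le hXi hYi θ.2.le⟩
  obtain ⟨s, θ, hθ, rfl⟩ : ∃ (s : ℝ) (θ : EuclideanSpace ℝ (Fin d)), ‖θ‖ = 1 ∧ t = s • θ :=
    ⟨‖t‖, ‖t‖⁻¹ • t, norm_smul_inv_norm ht, by simp [smul_smul, ht]⟩
  have hXθ := hXi.inner_const (𝕜 := ℝ) θ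
  have hYθ := hYi.inner_const (𝕜 := ℝ) θ
  have := Measure.isProbabilityMeasure_map (μ := volume) hXθ.aemeasurable
  have := Measure.isProbabilityMeasure_map (μ := volume) hYθ.aemeasurable
  rw [integral_cexp_I_mul_inner_smul_eq_charFun_map hXm,
    integral_cexp_I_mul_inner_smul_eq_charFun_map hYm, norm_smul, hθ, mul_one,
    Real.norm_eq_abs]
  refine (norm_charFun_sub_le_wassersteinDual hXθ.id_map hYθ.id_map s).trans ?_
  gcongr
  exact le_ciSup hbdd ⟨θ, hθ⟩
end
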